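/- Define t_max(y) = ⌊(y²−4)/3⌋ + 2 for integer y. Then for every integer y, t_max(y) ≡ y (mod 2), and for every integer y the function t ↦ |INF(y,t)| over integers t is maximized at t = t_max(y). -/

import Mathlib

/-- Heat kernel of the simple symmetric random walk on ℤ:
`H x t = 2^{-t} * choose t ((t+x)/2)` when `t ≥ 0`, `t ≡ x (mod 2)`, `|x| ≤ t`; else `0`. -/
noncomputable def H (x t : ℤ) : ℝ :=
  if 0 ≤ t ∧ (2 : ℤ) ∣ (t - x) ∧ |x| ≤ t then
    (2 : ℝ) ^ (-t) * (t.toNat.choose ((t + x) / 2).toNat)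
  else 0

/-- Influence of a deterministic right-step compared to a random step. -/
noncomputable def INF (y t : ℤ) : ℝ :=
  if t ≤ 0 then 0 else H (y + 1) (t - 1) - H y t

/-- `t_max y = ⌊(y² - 4)/3⌋ + 2`. -/
def tmax (y : ℤ) : ℤ := Int.fdiv (y ^ 2 - 4) 3 + 2

/-! For `t ≥ 1` one has `|INF y t| = (|y| / t) * H y t`, and Pascal's rule for the binomial
coefficients gives `((t + 2)² - y²) * |INF y (t + 2)| = t (t + 1) * |INF y t|`. So along the
parity class of `y`, `|INF y ·|` grows while `y² ≥ 3t + 4` and shrinks once `y² ≤ 3t + 3`;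
`tmax y` is the turning point because `3 tmax y - 2 ≤ y² ≤ 3 tmax y`. These bounds also give
the parity of `tmax y`, as `y² ≢ 2 (mod 3)`. -/

theorem le_of_rise_fall {β : Type*} [Preorder β] {f : ℤ → β} {a m : ℤ}
    (hrise : ∀ t, a ≤ t → t + 2 ≤ m → f t ≤ f (t + 2))
    (hfall : ∀ t, m ≤ t → f (t + 2) ≤ f t) {t : ℤ} (hat : a ≤ t) (htm : 2 ∣ t - m) :
    f t ≤ f m := by
  obtain ⟨n, hn⟩ := htm
  obtain ⟨k, rfl | rfl⟩ := Int.eq_nat_or_neg n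
  · obtain rfl : t = m + 2 * k := by omega
    clear hat hn
    induction k with
    | zero => simp
    | succ k ih =>
      calc f (m + 2 * ↑(k + 1)) = f (m + 2 * k + 2) := by push_cast; ring_nf
        _ ≤ f (m + 2 * k) := hfall _ (by omega)
        _ ≤ f m := ih
  · obtain rfl : t = m - 2 * k := by omega
    induction k with
    | zero => simp
    | succ k ih =>
      calc f (m - 2 * ↑(k + 1)) ≤ f (m - 2 * ↑(k + 1) + 2) := hrise _ hat (by omega)
        _ = f (m - 2 * k) := by push_cast; ring_nf
        _ ≤ f m := ih (by omega) (by omega)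

theorem H_nonneg (x t : ℤ) : 0 ≤ H x t := by
  unfold H
  split_ifs <;> positivity

theorem H_eq_zero {x t : ℤ} (h : ¬ (2 ∣ t - x ∧ |x| ≤ t)) : H x t = 0 :=
  if_neg fun hs => h hs.2

theorem H_two_mul_sub (n k : ℕ) : H (2 * k - n) n = 2 ^ (-(n : ℤ)) * n.choose k := by
  rcases le_or_gt k n with hk | hk
  · rw [H, if_pos ⟨by omega, ⟨n - k, by omega⟩, abs_le.2 ⟨by omega, by omega⟩⟩]
    congr
    omega
  · rw [Nat.choose_eq_zero_of_lt hk, Nat.cast_zero, mul_zero]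
    exact H_eq_zero fun h => by have := abs_le.1 h.2; omega

theorem exists_eq_two_mul_sub {x t : ℤ} (hdvd : 2 ∣ t - x) (hle : |x| ≤ t) :
    ∃ n k : ℕ, k ≤ n ∧ t = n ∧ x = 2 * k - n := by
  obtain ⟨hlo, hhi⟩ := abs_le.1 hle
  obtain ⟨j, hj⟩ := hdvd
  exact ⟨t.toNat, (t - j).toNat, by omega, by omega, by omega⟩

theorem INF_eq_neg_div_mul_H {y t : ℤ} (ht : 1 ≤ t) : INF y t = -(y / t) * H y t := by
  rw [INF, if_neg (by omega)]
  by_cases hs : 2 ∣ t - y ∧ |y| ≤ t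
  · obtain ⟨n, k, hk, rfl, rfl⟩ := exists_eq_two_mul_sub hs.1 hs.2
    obtain ⟨n, rfl⟩ : ∃ m, n = m + 1 := ⟨n - 1, by omega⟩
    have hchoose := Nat.choose_mul_succ_eq n k
    rw [show (2 * k - ↑(n + 1) + 1 : ℤ) = 2 * k - n by push_cast; ring,
      show ((n + 1 : ℕ) - 1 : ℤ) = n by push_cast; ring, H_two_mul_sub, H_two_mul_sub]
    have hchooseR : (n.choose k : ℝ) * (n + 1) = (n + 1).choose k * (n + 1 - k) := by
      have := congrArg (Nat.cast (R := ℝ)) hchoose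
      push_cast [Nat.cast_sub (show k ≤ n + 1 by omega)] at this
      exact this
    rw [show (-((n + 1 : ℕ) : ℤ)) = -n - 1 by push_cast; ring, zpow_sub₀ two_ne_zero]
    push_cast
    field_simp
    linear_combination 2 * hchooseR
  · have h1 : ¬ (2 ∣ t - 1 - (y + 1) ∧ |y + 1| ≤ t - 1) := by
      rintro ⟨hd, hle⟩
      exact hs ⟨by simpa [show t - 1 - (y + 1) = t - y - 2 by ring] using hd, by
        have := abs_le.1 hle; rw [abs_le]; omega⟩
    rw [H_eq_zero hs, H_eq_zero h1]
    ring

theorem sq_sub_sq_mul_H_add_two {x t : ℤ} (ht : 0 ≤ t) :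
    (((t : ℝ) + 2) ^ 2 - x ^ 2) * H x (t + 2) = (t + 1) * (t + 2) * H x t := by
  by_cases hs : 2 ∣ t - x ∧ |x| ≤ t
  · obtain ⟨n, k, hk, rfl, rfl⟩ := exists_eq_two_mul_sub hs.1 hs.2
    have hsucc := Nat.add_one_mul_choose_eq (n + 1) k
    have hpred := Nat.choose_mul_succ_eq n k
    rw [show (2 * k - n : ℤ) = 2 * ↑(k + 1) - ↑(n + 2) by push_cast; ring,
      show (n + 2 : ℤ) = ↑(n + 2) by push_cast; ring, H_two_mul_sub,
      show (2 * ↑(k + 1) - ↑(n + 2) : ℤ) = 2 * k - n by push_cast; ring, H_two_mul_sub]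
    have hsuccR : ((n + 1 + 1 : ℕ) : ℝ) * (n + 1).choose k = (n + 2).choose (k + 1) * (k + 1) := by
      exact_mod_cast hsucc
    have hpredR : (n.choose k : ℝ) * (n + 1) = (n + 1).choose k * (n + 1 - k) := by
      have := congrArg (Nat.cast (R := ℝ)) hpred
      push_cast [Nat.cast_sub (show k ≤ n + 1 by omega)] at this
      exact this
    rw [show (-((n + 2 : ℕ) : ℤ)) = -n - 2 by push_cast; ring, zpow_sub₀ two_ne_zero]
    push_cast at hsuccR ⊢
    field_simp
    -- `(n + 2)² - (2k - n)² = 4 (k + 1) (n + 1 - k)`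
    linear_combination (-4 * (n + 1 - k : ℝ)) * hsuccR - 4 * (n + 2 : ℝ) * hpredR
  · rw [H_eq_zero hs, mul_zero]
    by_cases hs' : 2 ∣ t + 2 - x ∧ |x| ≤ t + 2
    · have hx : x = t + 2 ∨ x = -(t + 2) := by
        have := abs_le.1 hs'.2
        rw [abs_le] at hs
        omega
      have : (x : ℝ) ^ 2 = ((t : ℝ) + 2) ^ 2 := by
        rcases hx with rfl | rfl <;> push_cast <;> ring
      rw [this, sub_self, zero_mul]
    · rw [H_eq_zero hs', mul_zero]

theorem sq_sub_sq_mul_abs_INF_add_two {y t : ℤ} (ht : 1 ≤ t) :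
    (((t : ℝ) + 2) ^ 2 - y ^ 2) * |INF y (t + 2)| = t * (t + 1) * |INF y t| := by
  have htR : (0 : ℝ) < t := by exact_mod_cast ht
  have hrec := sq_sub_sq_mul_H_add_two (x := y) (by omega : 0 ≤ t)
  rw [INF_eq_neg_div_mul_H ht, INF_eq_neg_div_mul_H (by omega : 1 ≤ t + 2)]
  simp only [abs_mul, abs_neg, abs_div, abs_of_nonneg (H_nonneg _ _), abs_of_pos htR,
    abs_of_pos (by positivity : (0 : ℝ) < ((t + 2 : ℤ) : ℝ))]
  push_cast
  field_simp
  linear_combination |(y : ℝ)| * hrec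

theorem abs_INF_le_abs_INF_add_two {y t : ℤ} (ht : 1 ≤ t) (hy : 3 * t + 4 ≤ y ^ 2) :
    |INF y t| ≤ |INF y (t + 2)| := by
  have hrec := sq_sub_sq_mul_abs_INF_add_two (y := y) ht
  have htR : (1 : ℝ) ≤ t := by exact_mod_cast ht
  have hyR : 3 * (t : ℝ) + 4 ≤ y ^ 2 := by exact_mod_cast hy
  have := abs_nonneg (INF y (t + 2))
  refine le_of_mul_le_mul_left (a := (t : ℝ) * (t + 1)) ?_ (by positivity)
  -- `t (t + 1) - ((t + 2)² - y²) = y² - 3t - 4`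
  nlinarith

theorem abs_INF_add_two_le {y t : ℤ} (ht : 1 ≤ t) (hy : y ^ 2 ≤ 3 * t + 3) :
    |INF y (t + 2)| ≤ |INF y t| := by
  have hrec := sq_sub_sq_mul_abs_INF_add_two (y := y) ht
  have htR : (1 : ℝ) ≤ t := by exact_mod_cast ht
  have hyR : (y : ℝ) ^ 2 ≤ 3 * t + 3 := by exact_mod_cast hy
  have := abs_nonneg (INF y (t + 2))
  refine le_of_mul_le_mul_left (a := (t : ℝ) * (t + 1)) ?_ (by positivity)
  nlinarith

theorem INF_eq_zero {y t : ℤ} (h : ¬ (1 ≤ t ∧ 2 ∣ t - y)) : INF y t = 0 := by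
  by_cases ht : 1 ≤ t
  · rw [INF_eq_neg_div_mul_H ht, H_eq_zero fun hs => h ⟨ht, hs.1⟩, mul_zero]
  · exact if_pos (by omega)

theorem INF_zero_left (t : ℤ) : INF 0 t = 0 := by
  by_cases ht : 1 ≤ t
  · simp [INF_eq_neg_div_mul_H ht]
  · exact if_pos (by omega)

theorem tmax_bounds (y : ℤ) : 3 * tmax y - 2 ≤ y ^ 2 ∧ y ^ 2 ≤ 3 * tmax y := by
  rw [tmax, Int.fdiv_eq_ediv_of_nonneg _ (by norm_num)]
  omega

theorem tmax_parity (y : ℤ) : 2 ∣ tmax y - y := by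
  have hbounds := tmax_bounds y
  have hsq3 : y ^ 2 % 3 ≠ 2 := by
    rcases (by omega : y % 3 = 0 ∨ y % 3 = 1 ∨ y % 3 = 2) with h | h | h <;>
      simp [pow_two, Int.mul_emod, h]
  have hsq2 : 2 ∣ y ^ 2 - y := by
    rw [show y ^ 2 - y = y * (y - 1) by ring]
    exact (Int.even_mul_pred_self y).two_dvd
  omega

theorem tmax_parity_and_max (y : ℤ) :
    (2 : ℤ) ∣ (tmax y - y) ∧ ∀ t : ℤ, |INF y t| ≤ |INF y (tmax y)| := by
  refine ⟨tmax_parity y, fun t => ?_⟩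
  rcases eq_or_ne y 0 with rfl | hy
  · simp [INF_zero_left]
  obtain ⟨hlo, hhi⟩ := tmax_bounds y
  have hy2 : 0 < y ^ 2 := by positivity
  by_cases ht : 1 ≤ t ∧ 2 ∣ t - tmax y
  · refine le_of_rise_fall (a := 1) (fun s hs hsT => abs_INF_le_abs_INF_add_two hs ?_)
      (fun s hs => abs_INF_add_two_le (by omega) ?_) ht.1 ht.2 <;> omega
  · have hpar := tmax_parity y
    rw [INF_eq_zero fun h => ht ⟨h.1, by omega⟩, abs_zero]
    exact abs_nonneg _
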